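/- Let β be a positive integer. Let x_1,…,x_β be i.i.d. arcsine-distributed random variables and d uniform on {−1,+1}, independent of the x_k. In the no-fading scenario (channel amplitude identically 1), let Y = (1+d)·Σ_{k=1}^{β} x_k. Then for any reals ε₁, ε₂, the harvested DC satisfies ε₁·E[Y²] + ε₂·E[Y⁴] = ε₁·β + 3·ε₂·β·(2β−1). -/

import Mathlib

open MeasureTheory ProbabilityTheory
open scoped ENNReal

/-- The arcsine (Chebyshev invariant) distribution on (−1,1), with density
1/(π√(1−x²)) for |x| < 1 and 0 otherwise. -/
noncomputable def arcsineMeasure : Measure ℝ :=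
  volume.withDensity fun x =>
    ENNReal.ofReal (if |x| < 1 then 1 / (Real.pi * Real.sqrt (1 - x ^ 2)) else 0)

/-- The uniform distribution on {−1, +1}. -/
noncomputable def rademacherMeasure : Measure ℝ :=
  (1 / 2 : ℝ≥0∞) • Measure.dirac (-1) + (1 / 2 : ℝ≥0∞) • Measure.dirac 1

/-! The arcsine law is the law of `cos Θ` with `Θ` uniform on `(0, π)`, so its moments are
`π⁻¹ ∫₀^π cosⁿ`, and the reduction formula for `∫ cosⁿ` gives `m₁ = 0`, `m₂ = 1/2`, `m₄ = 3/8`.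
For a sum `S` of independent centred variables, expanding `(X + S')ⁿ` binomially and factoring
each term by independence yields `E S² = β m₂` and `E S⁴ = β m₄ + 3β(β - 1) m₂²`. Finally `d` is
independent of `S` and `E (1 + d)ⁿ = 2ⁿ⁻¹`, so `E Y² = β` and `E Y⁴ = 3β(2β - 1)`. -/

open Real Set

lemma arcsineMeasure_eq_smul_map_cos :
    arcsineMeasure = ENNReal.ofReal π⁻¹ • (volume.restrict (Ioo 0 π)).map cos := by
  ext A hA
  have hcos : Measurable cos := continuous_cos.measurable
  set s := Ioo 0 π ∩ cos ⁻¹' A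
  have hs : MeasurableSet s := measurableSet_Ioo.inter (hcos hA)
  have himage : cos '' s = Ioo (-1) 1 ∩ A := by
    have hIoo : cos '' Ioo 0 π = Ioo (-1) 1 := cosPartialHomeomorph.image_source_eq_target
    rw [image_inter_preimage, hIoo]
  have hdensity : ∀ θ ∈ s, ENNReal.ofReal |-sin θ| *
      ENNReal.ofReal (1 / (π * √(1 - cos θ ^ 2))) = ENNReal.ofReal π⁻¹ := by
    intro θ hθ
    have hsin : 0 < sin θ := sin_pos_of_pos_of_lt_pi hθ.1.1 hθ.1.2
    rw [← ENNReal.ofReal_mul (abs_nonneg _), ← sin_sq, sqrt_sq hsin.le, abs_neg,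
      abs_of_pos hsin]
    congr 1
    field_simp
  calc arcsineMeasure A
      = ∫⁻ t in cos '' s, ENNReal.ofReal (1 / (π * √(1 - t ^ 2))) := by
        rw [arcsineMeasure, withDensity_apply _ hA, himage,
          ← Measure.restrict_restrict measurableSet_Ioo, ← lintegral_indicator measurableSet_Ioo]
        congr 1 with t
        simp only [indicator, mem_Ioo, ← abs_lt]
        split_ifs <;> simp
    _ = ∫⁻ θ in s, ENNReal.ofReal π⁻¹ := by
        rw [lintegral_image_eq_lintegral_abs_deriv_mul hs
          (fun θ _ => (hasDerivAt_cos θ).hasDerivWithinAt)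
          (cosPartialHomeomorph.injOn.mono inter_subset_left)]
        exact setLIntegral_congr_fun hs hdensity
    _ = _ := by
        rw [setLIntegral_const, Measure.smul_apply, Measure.map_apply hcos hA,
          Measure.restrict_apply (hcos hA), inter_comm, smul_eq_mul, mul_comm]

lemma ae_abs_le_one_arcsineMeasure : ∀ᵐ t ∂arcsineMeasure, |t| ≤ 1 := by
  rw [arcsineMeasure_eq_smul_map_cos]
  refine Measure.ae_smul_measure ?_ _
  exact (ae_map_iff continuous_cos.aemeasurable (measurableSet_le (by fun_prop) (by fun_prop))).2
    (ae_of_all _ abs_cos_le_one)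

lemma memLp_of_map_eq_arcsineMeasure {Ω : Type*} [MeasurableSpace Ω] {μ : Measure Ω}
    [IsFiniteMeasure μ] {X : Ω → ℝ} (hX : Measurable X) (hlaw : μ.map X = arcsineMeasure)
    (p : ℝ≥0∞) : MemLp X p μ := by
  have hbound : ∀ᵐ ω ∂μ, |X ω| ≤ 1 :=
    (ae_map_iff hX.aemeasurable (measurableSet_le (by fun_prop) (by fun_prop))).1
      (hlaw ▸ ae_abs_le_one_arcsineMeasure)
  exact MemLp.of_bound hX.aestronglyMeasurable 1 hbound

lemma integral_pow_arcsineMeasure (n : ℕ) :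
    ∫ t, t ^ n ∂arcsineMeasure = π⁻¹ * ∫ θ in 0..π, cos θ ^ n := by
  rw [arcsineMeasure_eq_smul_map_cos, integral_smul_measure,
    integral_map continuous_cos.aemeasurable (by fun_prop),
    intervalIntegral.integral_of_le pi_pos.le, integral_Ioc_eq_integral_Ioo,
    ENNReal.toReal_ofReal (inv_nonneg.2 pi_pos.le), smul_eq_mul]

lemma integral_pow_add_two_arcsineMeasure (n : ℕ) :
    ∫ t, t ^ (n + 2) ∂arcsineMeasure = (n + 1) / (n + 2) * ∫ t, t ^ n ∂arcsineMeasure := by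
  simp only [integral_pow_arcsineMeasure, integral_cos_pow, sin_zero, sin_pi]
  ring

lemma integral_id_arcsineMeasure : ∫ t, t ∂arcsineMeasure = 0 := by
  simpa using integral_pow_arcsineMeasure 1

lemma integral_sq_arcsineMeasure : ∫ t, t ^ 2 ∂arcsineMeasure = 1 / 2 := by
  rw [integral_pow_add_two_arcsineMeasure, integral_pow_arcsineMeasure]
  field_simp
  simp

lemma integral_pow_four_arcsineMeasure : ∫ t, t ^ 4 ∂arcsineMeasure = 3 / 8 := by
  rw [integral_pow_add_two_arcsineMeasure 2, integral_sq_arcsineMeasure]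
  norm_num

section IndependentSums

open Finset

variable {Ω : Type*} [MeasurableSpace Ω] {μ : Measure Ω}

lemma MeasureTheory.MemLp.integrable_pow_of_le [IsFiniteMeasure μ] {X : Ω → ℝ} {p k : ℕ}
    (hX : MemLp X p μ) (hk : k ≤ p) : Integrable (fun ω => X ω ^ k) μ :=
  (integrable_norm_pow_of_le hX.1 hk hX.integrable_norm_pow').mono' (hX.1.pow k)
    (ae_of_all _ fun ω => by simp [norm_pow])

lemma ProbabilityTheory.IndepFun.integral_add_pow [IsFiniteMeasure μ] {X Y : Ω → ℝ}
    (hXY : IndepFun X Y μ) {n : ℕ} (hX : MemLp X n μ) (hY : MemLp Y n μ) :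
    ∫ ω, (X ω + Y ω) ^ n ∂μ = ∑ m ∈ range (n + 1),
      (∫ ω, X ω ^ m ∂μ) * (∫ ω, Y ω ^ (n - m) ∂μ) * n.choose m := by
  have hterm : ∀ m ∈ range (n + 1),
      Integrable (fun ω => X ω ^ m * Y ω ^ (n - m) * n.choose m) μ := fun m hm =>
    ((hXY.comp (measurable_id.pow_const m) (measurable_id.pow_const (n - m))).integrable_mul
      (hX.integrable_pow_of_le (mem_range_succ_iff.1 hm))
      (hY.integrable_pow_of_le (n.sub_le m))).mul_const _
  simp_rw [add_pow]
  rw [integral_finsetSum _ hterm]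
  refine sum_congr rfl fun m _ => ?_
  rw [integral_mul_const]
  congr 1
  exact hXY.integral_fun_comp_mul_comp (f := (· ^ m)) (g := (· ^ (n - m))) hX.1.aemeasurable
    hY.1.aemeasurable (by fun_prop) (by fun_prop)

variable {ι : Type*} {X : ι → Ω → ℝ}

lemma ProbabilityTheory.iIndepFun.indepFun_sum_of_notMem (hX : iIndepFun X μ)
    (hmeas : ∀ i, Measurable (X i)) {s : Finset ι} {k : ι} (hk : k ∉ s) :
    IndepFun (X k) (fun ω => ∑ i ∈ s, X i ω) μ := by
  simpa only [← Finset.sum_apply] using (hX.indepFun_finsetSum_of_notMem hmeas hk).symm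

lemma ProbabilityTheory.iIndepFun.indepFun_sum_some [Fintype ι] {Z : Ω → ℝ}
    (h : iIndepFun (fun i : Option ι => i.elim Z X) μ) (hZ : Measurable Z)
    (hX : ∀ i, Measurable (X i)) : IndepFun Z (fun ω => ∑ i, X i ω) μ := by
  have hmeas : ∀ i : Option ι, Measurable (i.elim Z X) := by
    rintro (_ | i)
    exacts [hZ, hX i]
  have := h.indepFun_sum_of_notMem hmeas (s := univ.map .some) (k := none) (by simp)
  simpa only [sum_map, Function.Embedding.some_apply, Option.elim] using this

lemma integral_sum_eq_zero {s : Finset ι} (hint : ∀ i, Integrable (X i) μ)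
    (h0 : ∀ i, ∫ ω, X i ω ∂μ = 0) : ∫ ω, ∑ i ∈ s, X i ω ∂μ = 0 := by
  rw [integral_finsetSum _ fun i _ => hint i]
  exact sum_eq_zero fun i _ => h0 i

variable [IsProbabilityMeasure μ] [DecidableEq ι]

lemma ProbabilityTheory.iIndepFun.integral_sum_sq (hX : iIndepFun X μ)
    (hmeas : ∀ i, Measurable (X i)) (hL : ∀ i, MemLp (X i) 2 μ) (h0 : ∀ i, ∫ ω, X i ω ∂μ = 0)
    {σ2 : ℝ} (h2 : ∀ i, ∫ ω, X i ω ^ 2 ∂μ = σ2) (s : Finset ι) :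
    ∫ ω, (∑ i ∈ s, X i ω) ^ 2 ∂μ = #s * σ2 := by
  have hint : ∀ i, Integrable (X i) μ := fun i => (hL i).integrable one_le_two
  induction s using Finset.induction_on with
  | empty => simp
  | insert k s hk ih =>
    simp_rw [sum_insert hk]
    rw [(hX.indepFun_sum_of_notMem hmeas hk).integral_add_pow (hL k)
      (memLp_finsetSum s fun i _ => hL i)]
    simp only [sum_range_succ, Finset.range_one, sum_singleton, pow_zero, pow_one, integral_const,
      probReal_univ, smul_eq_mul, mul_one, one_mul, tsub_zero, tsub_self, Nat.add_one_sub_one,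
      Nat.choose_zero_right, Nat.choose_succ_self_right, Nat.choose_self, Nat.cast_one, h0, h2,
      ih, integral_sum_eq_zero hint h0, card_insert_of_notMem hk, Nat.cast_add, mul_zero,
      zero_mul, add_zero]
    ring

lemma ProbabilityTheory.iIndepFun.integral_sum_pow_four (hX : iIndepFun X μ)
    (hmeas : ∀ i, Measurable (X i)) (hL : ∀ i, MemLp (X i) 4 μ) (h0 : ∀ i, ∫ ω, X i ω ∂μ = 0)
    {σ2 m4 : ℝ} (h2 : ∀ i, ∫ ω, X i ω ^ 2 ∂μ = σ2) (h4 : ∀ i, ∫ ω, X i ω ^ 4 ∂μ = m4)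
    (s : Finset ι) :
    ∫ ω, (∑ i ∈ s, X i ω) ^ 4 ∂μ = #s * m4 + 3 * #s * (#s - 1) * σ2 ^ 2 := by
  have hL2 : ∀ i, MemLp (X i) 2 μ := fun i => (hL i).mono_exponent (by norm_num)
  have hint : ∀ i, Integrable (X i) μ := fun i => (hL i).integrable (by norm_num)
  induction s using Finset.induction_on with
  | empty => simp
  | insert k s hk ih =>
    simp_rw [sum_insert hk]
    rw [(hX.indepFun_sum_of_notMem hmeas hk).integral_add_pow (hL k)
      (memLp_finsetSum s fun i _ => hL i)]
    simp only [sum_range_succ, Finset.range_one, sum_singleton, pow_zero, pow_one, integral_const,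
      probReal_univ, smul_eq_mul, mul_one, one_mul, tsub_zero, tsub_self, Nat.reduceAdd,
      Nat.reduceSub, Nat.add_one_sub_one, Nat.choose, Nat.cast_one, Nat.cast_ofNat, h0, h2, h4, ih,
      hX.integral_sum_sq hmeas hL2 h0 h2, integral_sum_eq_zero hint h0, card_insert_of_notMem hk,
      Nat.cast_add, mul_zero, zero_mul, add_zero]
    ring

end IndependentSums

lemma integral_rademacherMeasure (f : ℝ → ℝ) :
    ∫ t, f t ∂rademacherMeasure = (f (-1) + f 1) / 2 := by
  rw [rademacherMeasure, integral_add_measure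
    ((integrable_dirac (by simp)).smul_measure (by simp))
    ((integrable_dirac (by simp)).smul_measure (by simp)),
    integral_smul_measure, integral_smul_measure, integral_dirac, integral_dirac]
  simp only [one_div, ENNReal.toReal_inv, ENNReal.toReal_ofNat, smul_eq_mul]
  ring

lemma ProbabilityTheory.IndepFun.integral_one_add_mul_pow_of_map_eq_rademacherMeasure
    {Ω : Type*} [MeasurableSpace Ω] {μ : Measure Ω} {D S : Ω → ℝ} (hDS : IndepFun D S μ)
    (hD : Measurable D) (hS : AEMeasurable S μ) (hlaw : μ.map D = rademacherMeasure)
    {n : ℕ} (hn : n ≠ 0) :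
    ∫ ω, ((1 + D ω) * S ω) ^ n ∂μ = 2 ^ n / 2 * ∫ ω, S ω ^ n ∂μ := by
  calc ∫ ω, ((1 + D ω) * S ω) ^ n ∂μ = ∫ ω, (1 + D ω) ^ n * S ω ^ n ∂μ := by simp_rw [mul_pow]
    _ = (∫ ω, (1 + D ω) ^ n ∂μ) * ∫ ω, S ω ^ n ∂μ :=
      hDS.integral_fun_comp_mul_comp (f := fun t => (1 + t) ^ n) (g := (· ^ n))
        hD.aemeasurable hS (by fun_prop) (by fun_prop)
    _ = 2 ^ n / 2 * ∫ ω, S ω ^ n ∂μ := by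
      rw [← integral_map hD.aemeasurable (f := fun t => (1 + t) ^ n) (by fun_prop), hlaw,
        integral_rademacherMeasure]
      norm_num [hn]

theorem stmt_3_general {Ω : Type*} [MeasurableSpace Ω] (P : Measure Ω) [IsProbabilityMeasure P]
    (β : ℕ)
    (x : Fin β → Ω → ℝ) (d : Ω → ℝ)
    (hxmeas : ∀ k, Measurable (x k)) (hdmeas : Measurable d)
    (hxlaw : ∀ k, Measure.map (x k) P = arcsineMeasure)
    (hdlaw : Measure.map d P = rademacherMeasure)
    (hindep : iIndepFun
      (fun i : Option (Fin β) => i.elim d x) P)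
    (Y : Ω → ℝ) (hY : Y = fun ω => (1 + d ω) * ∑ k, x k ω)
    (ε₁ ε₂ : ℝ) :
    ε₁ * (∫ ω, Y ω ^ 2 ∂P) + ε₂ * (∫ ω, Y ω ^ 4 ∂P)
      = ε₁ * (β : ℝ) + 3 * ε₂ * (β : ℝ) * (2 * (β : ℝ) - 1) := by
  have hx_moment (k : Fin β) (n : ℕ) : ∫ ω, x k ω ^ n ∂P = ∫ t, t ^ n ∂arcsineMeasure := by
    rw [← hxlaw k, integral_map (hxmeas k).aemeasurable (by fun_prop)]
  have hx_memLp (k : Fin β) (p : ℝ≥0∞) : MemLp (x k) p P :=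
    memLp_of_map_eq_arcsineMeasure (hxmeas k) (hxlaw k) p
  have hx0 (k : Fin β) : ∫ ω, x k ω ∂P = 0 := by
    simpa [integral_id_arcsineMeasure] using hx_moment k 1
  have hx2 (k : Fin β) := (hx_moment k 2).trans integral_sq_arcsineMeasure
  have hx : iIndepFun x P := hindep.precomp (g := some) (Option.some_injective _)
  have hS2 := hx.integral_sum_sq hxmeas (hx_memLp · 2) hx0 hx2 Finset.univ
  have hS4 := hx.integral_sum_pow_four hxmeas (hx_memLp · 4) hx0 hx2
    (fun k => (hx_moment k 4).trans integral_pow_four_arcsineMeasure) Finset.univ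
  have hdS := hindep.indepFun_sum_some hdmeas hxmeas
  have hS_meas : AEMeasurable (fun ω => ∑ k, x k ω) P := by fun_prop
  subst hY
  rw [hdS.integral_one_add_mul_pow_of_map_eq_rademacherMeasure hdmeas hS_meas hdlaw two_ne_zero,
    hdS.integral_one_add_mul_pow_of_map_eq_rademacherMeasure hdmeas hS_meas hdlaw four_ne_zero,
    hS2, hS4]
  simp only [Finset.card_univ, Fintype.card_fin]
  ring

/-- harvested DC of Y = (1+d)·Σ x_k (DCSK correlator output, no
fading): ε₁E[Y²] + ε₂E[Y⁴] = ε₁β + 3ε₂β(2β−1). -/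
theorem stmt_3 {Ω : Type*} [MeasurableSpace Ω] (P : Measure Ω) [IsProbabilityMeasure P]
    (β : ℕ) (hβ : 0 < β)
    (x : Fin β → Ω → ℝ) (d : Ω → ℝ)
    (hxmeas : ∀ k, Measurable (x k)) (hdmeas : Measurable d)
    (hxlaw : ∀ k, Measure.map (x k) P = arcsineMeasure)
    (hdlaw : Measure.map d P = rademacherMeasure)
    (hindep : iIndepFun
      (fun i : Option (Fin β) => i.elim d x) P)
    (Y : Ω → ℝ) (hY : Y = fun ω => (1 + d ω) * ∑ k, x k ω)
    (ε₁ ε₂ : ℝ) :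
    ε₁ * (∫ ω, Y ω ^ 2 ∂P) + ε₂ * (∫ ω, Y ω ^ 4 ∂P)
      = ε₁ * (β : ℝ) + 3 * ε₂ * (β : ℝ) * (2 * (β : ℝ) - 1) :=
  stmt_3_general P β x d hxmeas hdmeas hxlaw hdlaw hindep Y hY ε₁ ε₂
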